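/- For all matrices H_A (size m_A × n_A) and H_B (size m_B × n_B) over 𝔽₂, the hypergraph-product total complex satisfies: range ∂₂ ⊆ Ker ∂₁, and its homology dimensions are given by the Künneth formula: dim Ker ∂₂ = b₁(H_A) · b₁(H_B); dim Ker ∂₁ − dim range ∂₂ = b₁(H_A) · b₀(H_B) + b₀(H_A) · b₁(H_B); and m_A · m_B − rank ∂₁ = b₀(H_A) · b₀(H_B). -/
import Mathlib


open Matrix Kronecker

/-- `b₁(H) = dim Ker H`, the first Betti number of the two-term complex with boundary `H`. -/
noncomputable def bettiOne {m n : ℕ} (H : Matrix (Fin m) (Fin n) (ZMod 2)) : ℕ :=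
  Module.finrank (ZMod 2) (LinearMap.ker H.mulVecLin)

/-- `b₀(H) = m − rank H`, the zeroth Betti number of the two-term complex with boundary `H`. -/
noncomputable def bettiZero {m n : ℕ} (H : Matrix (Fin m) (Fin n) (ZMod 2)) : ℕ :=
  m - H.rank

/-- The boundary map `∂₂` of the hypergraph-product total complex:
`∂₂ x = ((H_A ⊗ I) x, (I ⊗ H_B) x)`. -/
noncomputable def hpD2 {mA nA mB nB : ℕ}
    (HA : Matrix (Fin mA) (Fin nA) (ZMod 2)) (HB : Matrix (Fin mB) (Fin nB) (ZMod 2)) :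
    ((Fin nA × Fin nB) → ZMod 2) →ₗ[ZMod 2]
      ((Fin mA × Fin nB) → ZMod 2) × ((Fin nA × Fin mB) → ZMod 2) :=
  LinearMap.prod
    (HA ⊗ₖ (1 : Matrix (Fin nB) (Fin nB) (ZMod 2))).mulVecLin
    ((1 : Matrix (Fin nA) (Fin nA) (ZMod 2)) ⊗ₖ HB).mulVecLin

/-- The boundary map `∂₁` of the hypergraph-product total complex:
`∂₁ (u, v) = (I ⊗ H_B) u + (H_A ⊗ I) v`. -/
noncomputable def hpD1 {mA nA mB nB : ℕ}
    (HA : Matrix (Fin mA) (Fin nA) (ZMod 2)) (HB : Matrix (Fin mB) (Fin nB) (ZMod 2)) :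
    (((Fin mA × Fin nB) → ZMod 2) × ((Fin nA × Fin mB) → ZMod 2)) →ₗ[ZMod 2]
      ((Fin mA × Fin mB) → ZMod 2) :=
  LinearMap.coprod
    ((1 : Matrix (Fin mA) (Fin mA) (ZMod 2)) ⊗ₖ HB).mulVecLin
    (HA ⊗ₖ (1 : Matrix (Fin mB) (Fin mB) (ZMod 2))).mulVecLin

notation "K2" => ZMod 2

/-- The curry/matrix/hom equivalence. -/
noncomputable def mE (i j : ℕ) :
    ((Fin i × Fin j) → K2) ≃ₗ[K2] ((Fin j → K2) →ₗ[K2] (Fin i → K2)) :=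
  (LinearEquiv.curry K2 K2 (Fin i) (Fin j)).trans Matrix.toLin'

lemma mE_apply (i j : ℕ) (x : (Fin i × Fin j) → K2) :
    mE i j x = (Matrix.of (Function.curry x)).mulVecLin := by
  show Matrix.toLin' (Matrix.of (Function.curry x)) = _
  exact Matrix.toLin'_apply' _

lemma mE_kron {a b c d : ℕ} (A : Matrix (Fin a) (Fin b) K2) (B : Matrix (Fin c) (Fin d) K2)
    (x : (Fin b × Fin d) → K2) :
    mE a c ((A ⊗ₖ B).mulVecLin x) = A.mulVecLin ∘ₗ mE b d x ∘ₗ Bᵀ.mulVecLin := by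
  rw [mE_apply, mE_apply]
  have h : Matrix.of (Function.curry ((A ⊗ₖ B).mulVecLin x)) =
      A * Matrix.of (Function.curry x) * Bᵀ := by
    ext i k
    simp only [Matrix.of_apply, Function.curry_apply, Matrix.mulVecLin_apply, Matrix.mulVec,
      dotProduct, Matrix.mul_apply, Matrix.transpose_apply, Matrix.kroneckerMap_apply,
      Fintype.sum_prod_type, Finset.sum_mul, Finset.mul_sum]
    rw [Finset.sum_comm]
    refine Finset.sum_congr rfl fun j _ => Finset.sum_congr rfl fun l _ => by ring
  rw [h, Matrix.mulVecLin_mul, Matrix.mulVecLin_mul]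
  rfl

lemma comp_factor_left {V W Z : Type*} [AddCommGroup V] [Module K2 V] [AddCommGroup W]
    [Module K2 W] [AddCommGroup Z] [Module K2 Z]
    (t : V →ₗ[K2] W) (h : V →ₗ[K2] Z) (hk : LinearMap.ker t ≤ LinearMap.ker h) :
    ∃ g : W →ₗ[K2] Z, h = g ∘ₗ t := by
  let g0 : LinearMap.range t →ₗ[K2] Z :=
    ((LinearMap.ker t).liftQ h hk) ∘ₗ t.quotKerEquivRange.symm.toLinearMap
  obtain ⟨g, hg⟩ := LinearMap.exists_extend g0
  refine ⟨g, ?_⟩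
  ext v
  have h1 : g (t v) = g ((LinearMap.range t).subtype ⟨t v, LinearMap.mem_range_self t v⟩) := rfl
  have h2 : t.quotKerEquivRange (Submodule.Quotient.mk v) =
      ⟨t v, LinearMap.mem_range_self t v⟩ :=
    Subtype.ext (LinearMap.quotKerEquivRange_apply_mk t v)
  have h3 : t.quotKerEquivRange.symm ⟨t v, LinearMap.mem_range_self t v⟩ =
      Submodule.Quotient.mk v := by
    rw [← h2, LinearEquiv.symm_apply_apply]
  simp only [LinearMap.comp_apply, h1]
  rw [← LinearMap.comp_apply g, hg]
  simp only [g0, LinearMap.comp_apply, LinearEquiv.coe_coe, LinearEquiv.coe_toLinearMap, h3,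
    Submodule.liftQ_apply]

lemma comp_factor_right {V W Z : Type*} [AddCommGroup V] [Module K2 V] [AddCommGroup W]
    [Module K2 W] [AddCommGroup Z] [Module K2 Z]
    (s : W →ₗ[K2] Z) (h : V →ₗ[K2] Z) (hr : LinearMap.range h ≤ LinearMap.range s) :
    ∃ g : V →ₗ[K2] W, h = s ∘ₗ g := by
  obtain ⟨r, hrr⟩ := LinearMap.exists_rightInverse_of_surjective s.rangeRestrict
    (LinearMap.range_rangeRestrict s)
  refine ⟨r ∘ₗ (h.codRestrict (LinearMap.range s) fun c => hr (LinearMap.mem_range_self h c)), ?_⟩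
  ext v
  have h1 : s (r (h.codRestrict (LinearMap.range s) (fun c => hr (LinearMap.mem_range_self h c)) v))
      = ((LinearMap.range s).subtype)
        ((s.rangeRestrict ∘ₗ r) (h.codRestrict (LinearMap.range s)
          (fun c => hr (LinearMap.mem_range_self h c)) v)) := rfl
  simp only [LinearMap.comp_apply, h1, hrr, LinearMap.id_apply, Submodule.coe_subtype,
    LinearMap.codRestrict_apply]

/-- The subspace of homomorphisms vanishing on `U` with range inside `W'`. -/
def homSub {V W : Type*} [AddCommGroup V] [Module K2 V] [AddCommGroup W] [Module K2 W]
    (U : Submodule K2 V) (W' : Submodule K2 W) : Submodule K2 (V →ₗ[K2] W) where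
  carrier := {f | U ≤ LinearMap.ker f ∧ LinearMap.range f ≤ W'}
  add_mem' := by
    rintro f g ⟨hf1, hf2⟩ ⟨hg1, hg2⟩
    refine ⟨fun x hx => ?_, ?_⟩
    · have h1 : f x = 0 := hf1 hx
      have h2 : g x = 0 := hg1 hx
      simp [LinearMap.mem_ker, h1, h2]
    · rintro _ ⟨x, rfl⟩
      exact W'.add_mem (hf2 (LinearMap.mem_range_self f x)) (hg2 (LinearMap.mem_range_self g x))
  zero_mem' := ⟨fun x _ => by simp [LinearMap.mem_ker], by rintro _ ⟨x, rfl⟩; simp⟩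
  smul_mem' := by
    rintro c f ⟨h1, h2⟩
    refine ⟨fun x hx => ?_, ?_⟩
    · have : f x = 0 := h1 hx
      simp [LinearMap.mem_ker, this]
    · rintro _ ⟨x, rfl⟩
      exact W'.smul_mem c (h2 (LinearMap.mem_range_self f x))

lemma mem_homSub {V W : Type*} [AddCommGroup V] [Module K2 V] [AddCommGroup W] [Module K2 W]
    {U : Submodule K2 V} {W' : Submodule K2 W} {f : V →ₗ[K2] W} :
    f ∈ homSub U W' ↔ U ≤ LinearMap.ker f ∧ LinearMap.range f ≤ W' := Iff.rfl

lemma finrank_homSub {V W : Type*} [AddCommGroup V] [Module K2 V] [AddCommGroup W] [Module K2 W]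
    [FiniteDimensional K2 V] [FiniteDimensional K2 W]
    (U : Submodule K2 V) (W' : Submodule K2 W) :
    Module.finrank K2 (homSub U W') = Module.finrank K2 (V ⧸ U) * Module.finrank K2 W' := by
  let Φ : ((V ⧸ U) →ₗ[K2] W') →ₗ[K2] (V →ₗ[K2] W) :=
    { toFun := fun g => W'.subtype ∘ₗ g ∘ₗ U.mkQ
      map_add' := fun g₁ g₂ => by ext v; simp
      map_smul' := fun c g => by ext v; simp }
  have hΦ : ∀ g v, Φ g v = (g (U.mkQ v) : W) := by
    intro g v; simp [Φ]
  have hinj : Function.Injective Φ := by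
    intro g₁ g₂ hg
    ext v
    have := congrArg (fun (f : V →ₗ[K2] W) => f v) hg
    simp only [hΦ] at this
    simpa [Submodule.mkQ_apply] using this
  have hrange : LinearMap.range Φ = homSub U W' := by
    ext f
    constructor
    · rintro ⟨g, rfl⟩
      refine ⟨fun x hx => ?_, ?_⟩
      · have hx0 : U.mkQ x = 0 := by
          simpa [Submodule.mkQ_apply] using (Submodule.Quotient.mk_eq_zero U).mpr hx
        simp [LinearMap.mem_ker, hΦ, hx0]
      · rintro _ ⟨x, rfl⟩
        rw [hΦ]
        exact (g (U.mkQ x)).2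
    · rintro ⟨h1, h2⟩
      refine ⟨LinearMap.codRestrict W' (U.liftQ f h1) fun q => ?_, ?_⟩
      · obtain ⟨x, rfl⟩ := U.mkQ_surjective q
        simpa [Submodule.mkQ_apply, Submodule.liftQ_apply] using h2 (LinearMap.mem_range_self f x)
      · ext v
        simp [hΦ, Submodule.mkQ_apply, Submodule.liftQ_apply]
  have h1 : Module.finrank K2 (homSub U W') = Module.finrank K2 ((V ⧸ U) →ₗ[K2] W') := by
    rw [← hrange]
    exact LinearMap.finrank_range_of_inj hinj
  rw [h1, Module.finrank_linearMap]



lemma ker_cond_left {a b d : ℕ} (A : Matrix (Fin a) (Fin b) K2) (x : (Fin b × Fin d) → K2) :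
    (A ⊗ₖ (1 : Matrix (Fin d) (Fin d) K2)).mulVecLin x = 0 ↔
      LinearMap.range (mE b d x) ≤ LinearMap.ker A.mulVecLin := by
  rw [LinearMap.range_le_ker_iff]
  constructor
  · intro h
    have hk := mE_kron A (1 : Matrix (Fin d) (Fin d) K2) x
    rw [h, map_zero, Matrix.transpose_one, Matrix.mulVecLin_one, LinearMap.comp_id] at hk
    exact hk.symm
  · intro h
    apply (mE a d).injective
    rw [map_zero, mE_kron, Matrix.transpose_one, Matrix.mulVecLin_one, LinearMap.comp_id, h]

lemma ker_cond_right {b c d : ℕ} (B : Matrix (Fin c) (Fin d) K2) (x : (Fin b × Fin d) → K2) :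
    ((1 : Matrix (Fin b) (Fin b) K2) ⊗ₖ B).mulVecLin x = 0 ↔
      LinearMap.range Bᵀ.mulVecLin ≤ LinearMap.ker (mE b d x) := by
  rw [LinearMap.range_le_ker_iff]
  constructor
  · intro h
    have hk := mE_kron (1 : Matrix (Fin b) (Fin b) K2) B x
    rw [h, map_zero, Matrix.mulVecLin_one, LinearMap.id_comp] at hk
    exact hk.symm
  · intro h
    apply (mE b c).injective
    rw [map_zero, mE_kron, Matrix.mulVecLin_one, LinearMap.id_comp, h]

lemma range_cond_left {a c d : ℕ} (B : Matrix (Fin c) (Fin d) K2) (y : (Fin a × Fin c) → K2) :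
    y ∈ LinearMap.range ((1 : Matrix (Fin a) (Fin a) K2) ⊗ₖ B).mulVecLin ↔
      LinearMap.ker Bᵀ.mulVecLin ≤ LinearMap.ker (mE a c y) := by
  constructor
  · rintro ⟨u, rfl⟩
    rw [mE_kron, Matrix.mulVecLin_one, LinearMap.id_comp]
    intro w hw
    rw [LinearMap.mem_ker] at hw ⊢
    rw [LinearMap.comp_apply, hw, map_zero]
  · intro h
    obtain ⟨g, hg⟩ := comp_factor_left Bᵀ.mulVecLin (mE a c y) h
    refine ⟨(mE a d).symm g, ?_⟩
    apply (mE a c).injective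
    rw [mE_kron, Matrix.mulVecLin_one, LinearMap.id_comp, LinearEquiv.apply_symm_apply, hg]

lemma range_cond_right {a b c : ℕ} (A : Matrix (Fin a) (Fin b) K2) (y : (Fin a × Fin c) → K2) :
    y ∈ LinearMap.range (A ⊗ₖ (1 : Matrix (Fin c) (Fin c) K2)).mulVecLin ↔
      LinearMap.range (mE a c y) ≤ LinearMap.range A.mulVecLin := by
  constructor
  · rintro ⟨u, rfl⟩
    rw [mE_kron, Matrix.transpose_one, Matrix.mulVecLin_one, LinearMap.comp_id]
    rintro _ ⟨w, rfl⟩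
    exact ⟨(mE b c u) w, rfl⟩
  · intro h
    obtain ⟨g, hg⟩ := comp_factor_right A.mulVecLin (mE a c y) h
    refine ⟨(mE b c).symm g, ?_⟩
    apply (mE a c).injective
    rw [mE_kron, Matrix.transpose_one, Matrix.mulVecLin_one, LinearMap.comp_id,
      LinearEquiv.apply_symm_apply, hg]


set_option maxHeartbeats 2000000 in
/-- For all matrices `H_A`, `H_B` over `𝔽₂`, the hypergraph-product total
complex satisfies `range ∂₂ ⊆ Ker ∂₁`, and its homology dimensions are given by the Künneth
formula: `dim Ker ∂₂ = b₁(H_A)·b₁(H_B)`,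
`dim Ker ∂₁ − dim range ∂₂ = b₁(H_A)·b₀(H_B) + b₀(H_A)·b₁(H_B)`, and
`m_A·m_B − rank ∂₁ = b₀(H_A)·b₀(H_B)`. -/
theorem hypergraph_product_kunneth {mA nA mB nB : ℕ}
    (HA : Matrix (Fin mA) (Fin nA) (ZMod 2)) (HB : Matrix (Fin mB) (Fin nB) (ZMod 2)) :
    LinearMap.range (hpD2 HA HB) ≤ LinearMap.ker (hpD1 HA HB) ∧
    Module.finrank (ZMod 2) (LinearMap.ker (hpD2 HA HB)) = bettiOne HA * bettiOne HB ∧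
    Module.finrank (ZMod 2) (LinearMap.ker (hpD1 HA HB))
        - Module.finrank (ZMod 2) (LinearMap.range (hpD2 HA HB))
      = bettiOne HA * bettiZero HB + bettiZero HA * bettiOne HB ∧
    mA * mB - Module.finrank (ZMod 2) (LinearMap.range (hpD1 HA HB))
      = bettiZero HA * bettiZero HB := by
  classical
  -- Part 1 : range ∂₂ ≤ ker ∂₁
  have part1 : LinearMap.range (hpD2 HA HB) ≤ LinearMap.ker (hpD1 HA HB) := by
    rintro _ ⟨x, rfl⟩
    rw [LinearMap.mem_ker]
    show ((1 : Matrix (Fin mA) (Fin mA) K2) ⊗ₖ HB).mulVecLin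
        ((HA ⊗ₖ (1 : Matrix (Fin nB) (Fin nB) K2)).mulVecLin x)
      + (HA ⊗ₖ (1 : Matrix (Fin mB) (Fin mB) K2)).mulVecLin
        (((1 : Matrix (Fin nA) (Fin nA) K2) ⊗ₖ HB).mulVecLin x) = 0
    have e1 : ((1 : Matrix (Fin mA) (Fin mA) K2) ⊗ₖ HB) *
        (HA ⊗ₖ (1 : Matrix (Fin nB) (Fin nB) K2)) = HA ⊗ₖ HB := by
      rw [← Matrix.mul_kronecker_mul, Matrix.one_mul, Matrix.mul_one]
    have e2 : (HA ⊗ₖ (1 : Matrix (Fin mB) (Fin mB) K2)) *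
        ((1 : Matrix (Fin nA) (Fin nA) K2) ⊗ₖ HB) = HA ⊗ₖ HB := by
      rw [← Matrix.mul_kronecker_mul, Matrix.one_mul, Matrix.mul_one]
    rw [← LinearMap.comp_apply, ← Matrix.mulVecLin_mul, e1,
      ← LinearMap.comp_apply, ← Matrix.mulVecLin_mul, e2]
    funext p
    exact CharTwo.add_self_eq_zero _
  -- kernel of ∂₂
  have hker2 : LinearMap.ker (hpD2 HA HB) =
      LinearMap.ker (HA ⊗ₖ (1 : Matrix (Fin nB) (Fin nB) K2)).mulVecLin ⊓
      LinearMap.ker ((1 : Matrix (Fin nA) (Fin nA) K2) ⊗ₖ HB).mulVecLin :=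
    LinearMap.ker_prod _ _
  have hmap2 : Submodule.map (mE nA nB : ((Fin nA × Fin nB) → K2) →ₗ[K2] _)
      (LinearMap.ker (hpD2 HA HB)) =
      homSub (LinearMap.range HBᵀ.mulVecLin) (LinearMap.ker HA.mulVecLin) := by
    rw [hker2]
    ext h
    rw [Submodule.mem_map_equiv, Submodule.mem_inf, LinearMap.mem_ker, LinearMap.mem_ker,
      ker_cond_left, ker_cond_right, LinearEquiv.apply_symm_apply, mem_homSub]
    exact and_comm
  have hk2 : Module.finrank K2 (LinearMap.ker (hpD2 HA HB)) =
      Module.finrank K2 ((Fin nB → K2) ⧸ LinearMap.range HBᵀ.mulVecLin) * bettiOne HA := by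
    rw [← LinearEquiv.finrank_map_eq (mE nA nB) (LinearMap.ker (hpD2 HA HB)), hmap2,
      finrank_homSub]
    rfl
  have hbq : Module.finrank K2 ((Fin nB → K2) ⧸ LinearMap.range HBᵀ.mulVecLin) = bettiOne HB := by
    have h1 := Submodule.finrank_quotient_add_finrank (LinearMap.range HBᵀ.mulVecLin)
    have h2 := LinearMap.finrank_range_add_finrank_ker HB.mulVecLin
    have h3 : Module.finrank K2 (LinearMap.range HBᵀ.mulVecLin) =
        Module.finrank K2 (LinearMap.range HB.mulVecLin) := Matrix.rank_transpose HB
    have h4 : Module.finrank K2 (Fin nB → K2) = nB := by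
      simp [Module.finrank_pi]
    have h5 : bettiOne HB = Module.finrank K2 (LinearMap.ker HB.mulVecLin) := rfl
    rw [h4] at h1 h2
    rw [h3] at h1
    omega
  have goal2 : Module.finrank K2 (LinearMap.ker (hpD2 HA HB)) = bettiOne HA * bettiOne HB := by
    rw [hk2, hbq, Nat.mul_comm]
  -- range of ∂₁
  have hmap1 : Submodule.map (mE mA mB : ((Fin mA × Fin mB) → K2) →ₗ[K2] _)
      (LinearMap.range (hpD1 HA HB)) =
      homSub (LinearMap.ker HBᵀ.mulVecLin) (⊤ : Submodule K2 (Fin mA → K2)) ⊔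
        homSub (⊥ : Submodule K2 (Fin mB → K2)) (LinearMap.range HA.mulVecLin) := by
    have hr : LinearMap.range (hpD1 HA HB) =
        LinearMap.range ((1 : Matrix (Fin mA) (Fin mA) K2) ⊗ₖ HB).mulVecLin ⊔
        LinearMap.range (HA ⊗ₖ (1 : Matrix (Fin mB) (Fin mB) K2)).mulVecLin :=
      LinearMap.range_coprod _ _
    rw [hr, Submodule.map_sup]
    congr 1
    · ext h
      rw [Submodule.mem_map_equiv, range_cond_left, LinearEquiv.apply_symm_apply, mem_homSub]
      simp
    · ext h
      rw [Submodule.mem_map_equiv, range_cond_right, LinearEquiv.apply_symm_apply, mem_homSub]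
      simp
  have hinf : homSub (LinearMap.ker HBᵀ.mulVecLin) (⊤ : Submodule K2 (Fin mA → K2)) ⊓
      homSub (⊥ : Submodule K2 (Fin mB → K2)) (LinearMap.range HA.mulVecLin) =
      homSub (LinearMap.ker HBᵀ.mulVecLin) (LinearMap.range HA.mulVecLin) := by
    ext h
    simp only [Submodule.mem_inf, mem_homSub, le_top, and_true, bot_le, true_and]
  have hr1 : Module.finrank K2 (LinearMap.range (hpD1 HA HB)) +
      Module.finrank K2 ((Fin mB → K2) ⧸ LinearMap.ker HBᵀ.mulVecLin) *
        Module.finrank K2 (LinearMap.range HA.mulVecLin)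
      = Module.finrank K2 ((Fin mB → K2) ⧸ LinearMap.ker HBᵀ.mulVecLin) *
          Module.finrank K2 (⊤ : Submodule K2 (Fin mA → K2))
        + Module.finrank K2 ((Fin mB → K2) ⧸ (⊥ : Submodule K2 (Fin mB → K2))) *
            Module.finrank K2 (LinearMap.range HA.mulVecLin) := by
    have hs := Submodule.finrank_sup_add_finrank_inf_eq
      (homSub (LinearMap.ker HBᵀ.mulVecLin) (⊤ : Submodule K2 (Fin mA → K2)))
      (homSub (⊥ : Submodule K2 (Fin mB → K2)) (LinearMap.range HA.mulVecLin))
    rw [hinf, finrank_homSub, finrank_homSub, finrank_homSub] at hs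
    rw [← LinearEquiv.finrank_map_eq (mE mA mB) (LinearMap.range (hpD1 HA HB)), hmap1]
    exact hs
  have hq1 : Module.finrank K2 ((Fin mB → K2) ⧸ LinearMap.ker HBᵀ.mulVecLin) = HB.rank := by
    have h1 := Submodule.finrank_quotient_add_finrank (LinearMap.ker HBᵀ.mulVecLin)
    have h2 := LinearMap.finrank_range_add_finrank_ker HBᵀ.mulVecLin
    have h3 : Module.finrank K2 (LinearMap.range HBᵀ.mulVecLin) = HB.rank :=
      Matrix.rank_transpose HB
    have h4 : Module.finrank K2 (Fin mB → K2) = mB := by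
      simp [Module.finrank_pi]
    rw [h4] at h1 h2
    rw [h3] at h2
    omega
  have hq2 : Module.finrank K2 ((Fin mB → K2) ⧸ (⊥ : Submodule K2 (Fin mB → K2))) = mB := by
    have h1 := Submodule.finrank_quotient_add_finrank (⊥ : Submodule K2 (Fin mB → K2))
    have h4 : Module.finrank K2 (Fin mB → K2) = mB := by
      simp [Module.finrank_pi]
    rw [h4, finrank_bot] at h1
    omega
  have htop : Module.finrank K2 (⊤ : Submodule K2 (Fin mA → K2)) = mA := by
    rw [finrank_top]
    simp [Module.finrank_pi]
  rw [hq1, hq2, htop] at hr1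
  have hrngA : Module.finrank K2 (LinearMap.range HA.mulVecLin) = HA.rank := rfl
  rw [hrngA] at hr1
  -- rank/nullity bookkeeping
  have hA1 : HA.rank + bettiOne HA = nA := by
    have h2 := LinearMap.finrank_range_add_finrank_ker HA.mulVecLin
    have h4 : Module.finrank K2 (Fin nA → K2) = nA := by
      simp [Module.finrank_pi]
    have h5 : HA.rank = Module.finrank K2 (LinearMap.range HA.mulVecLin) := rfl
    have h6 : bettiOne HA = Module.finrank K2 (LinearMap.ker HA.mulVecLin) := rfl
    omega
  have hB1 : HB.rank + bettiOne HB = nB := by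
    have h2 := LinearMap.finrank_range_add_finrank_ker HB.mulVecLin
    have h4 : Module.finrank K2 (Fin nB → K2) = nB := by
      simp [Module.finrank_pi]
    have h5 : HB.rank = Module.finrank K2 (LinearMap.range HB.mulVecLin) := rfl
    have h6 : bettiOne HB = Module.finrank K2 (LinearMap.ker HB.mulVecLin) := rfl
    omega
  have hA0 : HA.rank + bettiZero HA = mA := by
    have h1 := Matrix.rank_le_height HA
    have h2 : bettiZero HA = mA - HA.rank := rfl
    omega
  have hB0 : HB.rank + bettiZero HB = mB := by
    have h1 := Matrix.rank_le_height HB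
    have h2 : bettiZero HB = mB - HB.rank := rfl
    omega
  have hD2 : Module.finrank K2 (LinearMap.range (hpD2 HA HB)) +
      Module.finrank K2 (LinearMap.ker (hpD2 HA HB)) = nA * nB := by
    have h2 := LinearMap.finrank_range_add_finrank_ker (hpD2 HA HB)
    have h4 : Module.finrank K2 ((Fin nA × Fin nB) → K2) = nA * nB := by
      simp [Module.finrank_pi]
    rw [h4] at h2
    exact h2
  have hD1 : Module.finrank K2 (LinearMap.range (hpD1 HA HB)) +
      Module.finrank K2 (LinearMap.ker (hpD1 HA HB)) = mA * nB + nA * mB := by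
    have h2 := LinearMap.finrank_range_add_finrank_ker (hpD1 HA HB)
    have h4 : Module.finrank K2 (((Fin mA × Fin nB) → K2) × ((Fin nA × Fin mB) → K2)) =
        mA * nB + nA * mB := by
      rw [Module.finrank_prod]
      simp [Module.finrank_pi]
    rw [h4] at h2
    exact h2
  rw [goal2] at hD2
  -- integer arithmetic
  have hA1z : (nA : ℤ) = HA.rank + bettiOne HA := by exact_mod_cast hA1.symm
  have hB1z : (nB : ℤ) = HB.rank + bettiOne HB := by exact_mod_cast hB1.symm
  have hA0z : (mA : ℤ) = HA.rank + bettiZero HA := by exact_mod_cast hA0.symm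
  have hB0z : (mB : ℤ) = HB.rank + bettiZero HB := by exact_mod_cast hB0.symm
  have hD1z : (Module.finrank K2 (LinearMap.range (hpD1 HA HB)) : ℤ) +
      Module.finrank K2 (LinearMap.ker (hpD1 HA HB)) = mA * nB + nA * mB := by
    exact_mod_cast hD1
  have hD2z : (Module.finrank K2 (LinearMap.range (hpD2 HA HB)) : ℤ) +
      bettiOne HA * bettiOne HB = nA * nB := by exact_mod_cast hD2
  have hr1z : (Module.finrank K2 (LinearMap.range (hpD1 HA HB)) : ℤ) +
      HB.rank * HA.rank = HB.rank * mA + mB * HA.rank := by exact_mod_cast hr1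
  rw [hA1z, hB1z, hA0z, hB0z] at hD1z
  rw [hA1z, hB1z] at hD2z
  rw [hA0z, hB0z] at hr1z
  have key3 : Module.finrank K2 (LinearMap.ker (hpD1 HA HB)) =
      Module.finrank K2 (LinearMap.range (hpD2 HA HB)) +
        (bettiOne HA * bettiZero HB + bettiZero HA * bettiOne HB) := by
    have hz : (Module.finrank K2 (LinearMap.ker (hpD1 HA HB)) : ℤ) =
        Module.finrank K2 (LinearMap.range (hpD2 HA HB)) +
          (bettiOne HA * bettiZero HB + bettiZero HA * bettiOne HB) := by
      linear_combination hD1z - hr1z - hD2z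
    exact_mod_cast hz
  have key4 : Module.finrank K2 (LinearMap.range (hpD1 HA HB)) +
      bettiZero HA * bettiZero HB = mA * mB := by
    have hz : (Module.finrank K2 (LinearMap.range (hpD1 HA HB)) : ℤ) +
        bettiZero HA * bettiZero HB = mA * mB := by
      rw [hA0z, hB0z]
      linear_combination hr1z
    exact_mod_cast hz
  refine ⟨part1, goal2, ?_, ?_⟩
  · rw [key3]
    exact Nat.add_sub_cancel_left _ _
  · rw [← key4]
    exact Nat.add_sub_cancel_left _ _
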